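/- arXiv:0901.0856 — 5 statements merged into one kernel-verified Lean document; each statement's English description precedes it below -/
import Mathlib

section
/- For every integer n ≥ 1, the sum over all integers p with p ≠ n and p ≠ -n of 1/(n²-p²)² is strictly less than 4/n². -/
/-!
Write `1 / (n² - p²) = (1 / (n - p) + 1 / (n + p)) / (2n)`. Since `(u + v)² ≤ 2 (u² + v²)`,
each term is at most `(1 / (p - n)² + 1 / (p + n)²) / (2n²)`, and each of these two shifted
series sums to `∑_{k ∈ ℤ, k ≠ 0} 1 / k² = π² / 3`. Hence the sum is at most `π² / (3n²)`, which
is less than `4 / n²` because `π² < 12`.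
-/

open Real

-- The `k = 0` term is `1 / 0 = 0`, so this is `2 ζ(2)`.
theorem hasSum_int_one_div_sq : HasSum (fun k : ℤ => 1 / (k : ℝ) ^ 2) (π ^ 2 / 3) := by
  have hpos : HasSum (fun k : ℕ => 1 / ((k : ℤ) : ℝ) ^ 2) (π ^ 2 / 6) := by
    simpa using hasSum_zeta_two
  have hsucc : HasSum (fun k : ℕ => 1 / ((k + 1 : ℕ) : ℝ) ^ 2) (π ^ 2 / 6) := by
    simpa using (hasSum_nat_add_iff' 1).mpr hasSum_zeta_two
  have hneg : HasSum (fun k : ℕ => 1 / ((-(k + 1 : ℤ) : ℤ) : ℝ) ^ 2) (π ^ 2 / 6) := by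
    refine hsucc.congr_fun fun k => ?_
    push_cast
    ring
  rw [show π ^ 2 / 3 = π ^ 2 / 6 + π ^ 2 / 6 by ring]
  exact HasSum.of_nat_of_neg_add_one (f := fun k : ℤ => 1 / (k : ℝ) ^ 2) hpos hneg

theorem hasSum_int_one_div_sub_sq (c : ℤ) :
    HasSum (fun k : ℤ => 1 / ((k - c : ℤ) : ℝ) ^ 2) (π ^ 2 / 3) :=
  (Equiv.subRight c).hasSum_iff (f := fun k : ℤ => 1 / (k : ℝ) ^ 2) |>.mpr hasSum_int_one_div_sq

theorem one_div_sq_sub_sq_sq_le (x y : ℝ) (hx : x ≠ 0) :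
    1 / (x ^ 2 - y ^ 2) ^ 2 ≤ (1 / (y - x) ^ 2 + 1 / (y + x) ^ 2) / (2 * x ^ 2) := by
  have hfactor : (x ^ 2 - y ^ 2) ^ 2 = ((y - x) * (y + x)) ^ 2 := by ring
  rw [hfactor]
  rcases eq_or_ne ((y - x) * (y + x)) 0 with hzero | hne
  · rw [hzero]
    simp only [ne_eq, OfNat.ofNat_ne_zero, not_false_eq_true, zero_pow, div_zero]
    positivity
  obtain ⟨hsub, hadd⟩ := mul_ne_zero_iff.mp hne
  rw [div_le_div_iff₀ (by positivity) (by positivity)]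
  field_simp
  nlinarith [sq_nonneg (y - x - (y + x))]

theorem stmt_1 (n : ℤ) (hn : 1 ≤ n) :
    ∑' p : {p : ℤ // p ≠ n ∧ p ≠ -n},
      (1 : ℝ) / ((n ^ 2 - (p : ℤ) ^ 2 : ℤ) : ℝ) ^ 2 < 4 / (n : ℝ) ^ 2 := by
  have hn0 : (0 : ℝ) < n := by exact_mod_cast hn
  set f : ℤ → ℝ := fun p => 1 / ((n ^ 2 - p ^ 2 : ℤ) : ℝ) ^ 2
  set g : ℤ → ℝ := fun p =>
    (1 / ((p - n : ℤ) : ℝ) ^ 2 + 1 / ((p - -n : ℤ) : ℝ) ^ 2) / (2 * (n : ℝ) ^ 2)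
  have hg : HasSum g ((π ^ 2 / 3 + π ^ 2 / 3) / (2 * (n : ℝ) ^ 2)) :=
    ((hasSum_int_one_div_sub_sq n).add (hasSum_int_one_div_sub_sq (-n))).div_const _
  have hfg : ∀ p, f p ≤ g p := fun p => by
    simpa [f, g, sub_neg_eq_add] using one_div_sq_sub_sq_sq_le n p hn0.ne'
  have hf : Summable f := .of_nonneg_of_le (fun _ => by positivity) hfg hg.summable
  have hpi : π ^ 2 < 12 := by nlinarith [pi_lt_d2, pi_pos]
  calc _ ≤ ∑' p, f p := hf.tsum_subtype_le f _ fun _ => by positivity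
    _ ≤ (π ^ 2 / 3 + π ^ 2 / 3) / (2 * (n : ℝ) ^ 2) := hasSum_le hfg hf.hasSum hg
    _ < 4 / (n : ℝ) ^ 2 := by
      rw [div_lt_div_iff₀ (by positivity) (by positivity)]
      nlinarith [pow_pos hn0 2]
end

section
/- Let r = (r(k))_{k∈ℤ} be a square-summable sequence of nonnegative reals with norm ‖r‖ = (Σ_k r(k)²)^{1/2}, and for m ∈ ℕ let E_m(r) = (Σ_{|j|≥m} r(j)²)^{1/2}. Then for every integer n with |n| ≥ 1, Σ_{k≠n} r(n+k)²/|n-k| ≤ ‖r‖²/|n| + E_{|n|}(r)². -/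
/-!
Split the terms according to whether `|n + k| ≥ |n|`. If so, `|n - k| ≥ 1` bounds the term by
`r(n + k)²`, which belongs to the tail `E_{|n|}(r)²`. If not, then `|n - k| ≥ 2|n| - |n + k| > |n|`,
so the term is at most `r(n + k)² / |n|`. Summing over `k` and shifting `j = n + k` gives the bound.
-/

theorem abs_lt_abs_sub_of_abs_add_lt {α : Type*} [AddCommGroup α] [LinearOrder α]
    [IsOrderedAddMonoid α] {n k : α} (h : |n + k| < |n|) : |n| < |n - k| := by
  have htri := abs_add_le (n + k) (n - k)
  rw [show n + k + (n - k) = 2 • n by abel, abs_nsmul, two_nsmul] at htri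
  exact lt_of_add_lt_add_left (htri.trans_lt (add_lt_add_of_lt_of_le h le_rfl))

theorem div_abs_sub_le_div_abs_add_indicator {f : ℤ → ℝ} (hf : 0 ≤ f) {n k : ℤ} (hk : k ≠ n) :
    f (n + k) / ((|n - k| : ℤ) : ℝ) ≤
      f (n + k) / ((|n| : ℤ) : ℝ) + {j : ℤ | |n| ≤ |j|}.indicator f (n + k) := by
  have hfk : 0 ≤ f (n + k) := hf _
  by_cases hbig : |n| ≤ |n + k|
  · have hsub : (1 : ℝ) ≤ ((|n - k| : ℤ) : ℝ) := by
      exact_mod_cast Int.one_le_abs (sub_ne_zero.2 hk.symm)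
    rw [Set.indicator_of_mem (show n + k ∈ {j : ℤ | |n| ≤ |j|} from hbig)]
    exact (div_le_self hfk hsub).trans (le_add_of_nonneg_left (by positivity))
  · have hlt := abs_lt_abs_sub_of_abs_add_lt (not_le.1 hbig)
    have hn : (0 : ℝ) < ((|n| : ℤ) : ℝ) := by exact_mod_cast (abs_nonneg _).trans_lt (not_le.1 hbig)
    rw [Set.indicator_of_notMem (show n + k ∉ {j : ℤ | |n| ≤ |j|} from hbig), add_zero]
    exact div_le_div_of_nonneg_left hfk hn (by exact_mod_cast hlt.le)

theorem tsum_ne_div_abs_sub_le {f : ℤ → ℝ} (hf : 0 ≤ f) (hsum : Summable f) (n : ℤ) :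
    ∑' k : {k : ℤ // k ≠ n}, f (n + k) / ((|n - (k : ℤ)| : ℤ) : ℝ) ≤
      (∑' k : ℤ, f k) / ((|n| : ℤ) : ℝ) + ∑' j : {j : ℤ // |n| ≤ |j|}, f j := by
  set G : ℤ → ℝ := fun j => f j / ((|n| : ℤ) : ℝ) + {j : ℤ | |n| ≤ |j|}.indicator f j
  have hG : Summable G := (hsum.div_const _).add (hsum.indicator _)
  have hG0 : ∀ j, 0 ≤ G j := fun j =>
    add_nonneg (div_nonneg (hf j) (by positivity)) (Set.indicator_nonneg (fun j _ => hf j) j)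
  have hshift : Summable (fun k => G (n + k)) := (Equiv.addLeft n).summable_iff.2 hG
  have hle : ∀ k : {k : ℤ // k ≠ n}, f (n + k) / ((|n - (k : ℤ)| : ℤ) : ℝ) ≤ G (n + k) :=
    fun k => div_abs_sub_le_div_abs_add_indicator hf k.2
  have hlhs : Summable fun k : {k : ℤ // k ≠ n} => f (n + k) / ((|n - (k : ℤ)| : ℤ) : ℝ) :=
    (hshift.subtype _).of_nonneg_of_le (fun k => div_nonneg (hf _) (by positivity)) hle
  calc ∑' k : {k : ℤ // k ≠ n}, f (n + k) / ((|n - (k : ℤ)| : ℤ) : ℝ)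
      ≤ ∑' k : {k : ℤ // k ≠ n}, G (n + k) := hlhs.tsum_le_tsum hle (hshift.subtype _)
    _ ≤ ∑' k : ℤ, G (n + k) := hshift.tsum_subtype_le _ {k | k ≠ n} (fun k => hG0 _)
    _ = ∑' j : ℤ, G j := (Equiv.addLeft n).tsum_eq G
    _ = (∑' k : ℤ, f k) / ((|n| : ℤ) : ℝ) + ∑' j : {j : ℤ // |n| ≤ |j|}, f j := by
      rw [(hsum.div_const _).tsum_add (hsum.indicator _), tsum_div_const,
        ← tsum_subtype {j : ℤ | |n| ≤ |j|} f]
      rfl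

theorem stmt_4_general (r : ℤ → ℝ)
    (hsum : Summable (fun k => (r k) ^ 2)) (n : ℤ) :
    ∑' k : {k : ℤ // k ≠ n}, (r (n + (k : ℤ))) ^ 2 / ((|n - (k : ℤ)| : ℤ) : ℝ) ≤
      (∑' k : ℤ, (r k) ^ 2) / ((|n| : ℤ) : ℝ) +
        ∑' j : {j : ℤ // |n| ≤ |j|}, (r (j : ℤ)) ^ 2 :=
  tsum_ne_div_abs_sub_le (f := fun k => r k ^ 2) (fun k => sq_nonneg (r k)) hsum n

theorem stmt_4 (r : ℤ → ℝ) (hr : ∀ k, 0 ≤ r k)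
    (hsum : Summable (fun k => (r k) ^ 2)) (n : ℤ) (hn : 1 ≤ |n|) :
    ∑' k : {k : ℤ // k ≠ n}, (r (n + (k : ℤ))) ^ 2 / ((|n - (k : ℤ)| : ℤ) : ℝ) ≤
      (∑' k : ℤ, (r k) ^ 2) / ((|n| : ℤ) : ℝ) +
        ∑' j : {j : ℤ // |n| ≤ |j|}, (r (j : ℤ)) ^ 2 :=
  stmt_4_general r hsum n
end

section
/- Let r = (r(k))_{k∈ℤ} ∈ ℓ²(ℤ) with nonnegative entries, norm ‖r‖, and tail norms E_m(r) = (Σ_{|j|≥m} r(j)²)^{1/2}. There is an absolute constant C such that for every integer n with |n| ≥ 1, Σ_{i≠n} Σ_{k≠n} r(i+k)²/(|n-i||n-k|) ≤ C(‖r‖²/√|n| + E_{|n|}(r)²). -/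
/-!
Substituting `j = i + k` and `i = n - a`, the double sum becomes `∑ⱼ r(j)² K(2n - j)` with
`K(m) = ∑ₐ 1 / (|a| |m - a|)`. If `a + b = m` with `a, b ≠ 0`, the larger of `|a|, |b|` is at
least the smaller one and at least `max(|m|, 2) / 2`, whence
`1 / (|a| |b|) ≤ √(2 / w) (|a|^(-3/2) + |b|^(-3/2))` for `0 < w ≤ max(|m|, 2)`, and so
`K(m) ≤ 2 √(2 / w) Z` with `Z = ∑ₐ |a|^(-3/2)`. Taking `w = 2` bounds `K` by `2Z` on the tail
`|j| ≥ |n|`; for `|j| < |n|` we have `|2n - j| ≥ |n|`, so `K(2n - j) ≤ 2 √(2 / |n|) Z`.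
This gives the theorem with `C = 4Z`.
-/

open Real
open scoped ENNReal

lemma rpow_neg_three_halves {u : ℝ} (hu : 0 < u) : u ^ (-(3 / 2 : ℝ)) = 1 / (u * √u) := by
  rw [rpow_neg hu.le, show (3 / 2 : ℝ) = 1 + 1 / 2 by norm_num, rpow_add hu, rpow_one,
    ← sqrt_eq_rpow, one_div]

lemma one_div_mul_le_sqrt_mul_rpow {u v w : ℝ} (hu : 1 ≤ u) (huv : u ≤ v) (hw : 0 < w)
    (hwuv : w ≤ u + v) : 1 / (u * v) ≤ √(2 / w) * u ^ (-(3 / 2 : ℝ)) := by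
  have hu0 : 0 < u := by linarith
  have hv0 : 0 < v := by linarith
  have hsqrt_le : √u ≤ √(2 / w) * v := by
    rw [← sqrt_sq hv0.le, ← sqrt_mul (by positivity)]
    refine sqrt_le_sqrt ?_
    rw [div_mul_eq_mul_div, le_div_iff₀ hw]
    nlinarith
  rw [rpow_neg_three_halves hu0, mul_one_div, div_le_div_iff₀ (by positivity) (by positivity)]
  nlinarith [sqrt_pos.2 hu0]

lemma one_div_mul_le_sqrt_mul_rpow_add {u v w : ℝ} (hu : 1 ≤ u) (hv : 1 ≤ v) (hw : 0 < w)
    (hwuv : w ≤ u + v) :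
    1 / (u * v) ≤ √(2 / w) * (u ^ (-(3 / 2 : ℝ)) + v ^ (-(3 / 2 : ℝ))) := by
  wlog huv : u ≤ v generalizing u v
  · rw [mul_comm, add_comm]
    exact this hv hu (by linarith) (by linarith)
  calc 1 / (u * v) ≤ √(2 / w) * u ^ (-(3 / 2 : ℝ)) :=
        one_div_mul_le_sqrt_mul_rpow hu huv hw hwuv
    _ ≤ _ := by gcongr; exact le_add_of_nonneg_right (by positivity)

lemma one_div_abs_mul_abs_le (a b : ℤ) {w : ℝ} (hw : 0 < w) (hwab : w ≤ max |(a + b : ℝ)| 2) :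
    1 / (|(a : ℝ)| * |(b : ℝ)|) ≤
      √(2 / w) * (|(a : ℝ)| ^ (-(3 / 2 : ℝ)) + |(b : ℝ)| ^ (-(3 / 2 : ℝ))) := by
  rcases eq_or_ne a 0 with rfl | ha
  · simp only [Int.cast_zero, abs_zero, zero_mul, div_zero]; positivity
  rcases eq_or_ne b 0 with rfl | hb
  · simp only [Int.cast_zero, abs_zero, mul_zero, div_zero]; positivity
  have one_le_abs {c : ℤ} (hc : c ≠ 0) : (1 : ℝ) ≤ |(c : ℝ)| := by
    exact_mod_cast Int.one_le_abs hc
  refine one_div_mul_le_sqrt_mul_rpow_add (one_le_abs ha) (one_le_abs hb) hw ?_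
  exact hwab.trans (max_le (abs_add_le _ _) (by linarith [one_le_abs ha, one_le_abs hb]))

/-- The terms `a = 0` and `a = m` vanish, as `x / 0 = 0`. -/
noncomputable def invAbsConv (m : ℤ) : ℝ :=
  ∑' a : ℤ, 1 / (|(a : ℝ)| * |((m - a : ℤ) : ℝ)|)

lemma summable_abs_int_rpow_comp_sub {b : ℝ} (hb : 1 < b) (m : ℤ) :
    Summable fun a : ℤ => |((m - a : ℤ) : ℝ)| ^ (-b) :=
  (Equiv.subLeft m).summable_iff.2 (summable_abs_int_rpow hb)

lemma one_div_abs_mul_abs_sub_le (m a : ℤ) {w : ℝ} (hw : 0 < w) (hwm : w ≤ max |(m : ℝ)| 2) :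
    1 / (|(a : ℝ)| * |((m - a : ℤ) : ℝ)|) ≤
      √(2 / w) * (|(a : ℝ)| ^ (-(3 / 2 : ℝ)) + |((m - a : ℤ) : ℝ)| ^ (-(3 / 2 : ℝ))) :=
  one_div_abs_mul_abs_le a (m - a) hw (by push_cast; simpa using hwm)

lemma summable_invAbsConv (m : ℤ) :
    Summable fun a : ℤ => 1 / (|(a : ℝ)| * |((m - a : ℤ) : ℝ)|) := by
  refine .of_nonneg_of_le (fun a => by positivity)
    (fun a => one_div_abs_mul_abs_sub_le m a two_pos (le_max_right _ _)) ?_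
  exact ((summable_abs_int_rpow (by norm_num)).add
    (summable_abs_int_rpow_comp_sub (by norm_num) m)).mul_left _

lemma invAbsConv_nonneg (m : ℤ) : 0 ≤ invAbsConv m :=
  tsum_nonneg fun a => by positivity

lemma invAbsConv_le (m : ℤ) {w : ℝ} (hw : 0 < w) (hwm : w ≤ max |(m : ℝ)| 2) :
    invAbsConv m ≤ 2 * √(2 / w) * ∑' a : ℤ, |(a : ℝ)| ^ (-(3 / 2 : ℝ)) := by
  have hZ := summable_abs_int_rpow (b := 3 / 2) (by norm_num)
  calc invAbsConv m
      ≤ ∑' a : ℤ, √(2 / w) * (|(a : ℝ)| ^ (-(3 / 2 : ℝ)) + |((m - a : ℤ) : ℝ)| ^ (-(3 / 2 : ℝ))) :=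
        (summable_invAbsConv m).tsum_le_tsum (one_div_abs_mul_abs_sub_le m · hw hwm)
          ((hZ.add (summable_abs_int_rpow_comp_sub (by norm_num) m)).mul_left _)
    _ = 2 * √(2 / w) * ∑' a : ℤ, |(a : ℝ)| ^ (-(3 / 2 : ℝ)) := by
      have hshift := (Equiv.subLeft m).tsum_eq fun a : ℤ => |(a : ℝ)| ^ (-(3 / 2 : ℝ))
      simp only [Equiv.subLeft_apply] at hshift
      rw [tsum_mul_left, hZ.tsum_add (summable_abs_int_rpow_comp_sub (by norm_num) m),
        hshift]
      ring

lemma ENNReal.ofReal_tsum_le_tsum_ofReal {α : Type*} {f : α → ℝ} (hf : ∀ a, 0 ≤ f a) :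
    ENNReal.ofReal (∑' a, f a) ≤ ∑' a, ENNReal.ofReal (f a) := by
  by_cases h : Summable f
  · rw [ENNReal.ofReal_tsum_of_nonneg hf h]
  · simp [tsum_eq_zero_of_not_summable h]

lemma ENNReal.tsum_tsum_mul_comp_add {G : Type*} [AddCommGroup G] (F : G → ℝ≥0∞)
    (K : G → G → ℝ≥0∞) :
    ∑' i, ∑' k, F (i + k) * K i k = ∑' j, F j * ∑' i, K i (j - i) := by
  calc ∑' i, ∑' k, F (i + k) * K i k = ∑' i, ∑' j, F j * K i (j - i) := by
        refine tsum_congr fun i => ?_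
        rw [← (Equiv.subRight i).tsum_eq]
        simp
    _ = ∑' j, F j * ∑' i, K i (j - i) := by
        rw [ENNReal.tsum_comm]
        simp_rw [ENNReal.tsum_mul_left]

lemma tsum_ofReal_one_div_abs_mul_abs_eq (n j : ℤ) :
    ∑' i : ℤ, ENNReal.ofReal (1 / (((|n - i| : ℤ) : ℝ) * ((|n - (j - i)| : ℤ) : ℝ))) =
      ENNReal.ofReal (invAbsConv (2 * n - j)) := by
  rw [invAbsConv, ENNReal.ofReal_tsum_of_nonneg (fun a => by positivity) (summable_invAbsConv _),
    ← (Equiv.subLeft n).tsum_eq]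
  refine tsum_congr fun a => ?_
  simp only [Equiv.subLeft_apply, sub_sub_cancel, Int.cast_abs]
  congr 5
  ring

lemma invAbsConv_le_two_mul (m : ℤ) :
    invAbsConv m ≤ 2 * ∑' a : ℤ, |(a : ℝ)| ^ (-(3 / 2 : ℝ)) := by
  simpa using invAbsConv_le m two_pos (le_max_right _ _)

lemma summable_sq_mul_invAbsConv {r : ℤ → ℝ} (hr : Summable fun k => r k ^ 2) (c : ℤ) :
    Summable fun j => r j ^ 2 * invAbsConv (c - j) :=
  .of_nonneg_of_le (fun _ => mul_nonneg (sq_nonneg _) (invAbsConv_nonneg _))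
    (fun _ => mul_le_mul_of_nonneg_left (invAbsConv_le_two_mul _) (sq_nonneg _))
    (hr.mul_right _)

lemma tsum_tsum_sq_div_le_tsum_mul_invAbsConv {r : ℤ → ℝ} (hr : Summable fun k => r k ^ 2)
    (n : ℤ) :
    ∑' i : {i : ℤ // i ≠ n}, ∑' k : {k : ℤ // k ≠ n},
        r (i + k) ^ 2 / (((|n - i| : ℤ) : ℝ) * ((|n - k| : ℤ) : ℝ)) ≤
      ∑' j, r j ^ 2 * invAbsConv (2 * n - j) := by
  set t : ℤ → ℤ → ℝ := fun i k => r (i + k) ^ 2 / (((|n - i| : ℤ) : ℝ) * ((|n - k| : ℤ) : ℝ))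
  have ht : ∀ i k, 0 ≤ t i k := fun i k => by positivity
  rw [← ENNReal.ofReal_le_ofReal_iff (tsum_nonneg fun _ =>
    mul_nonneg (sq_nonneg _) (invAbsConv_nonneg _))]
  calc ENNReal.ofReal (∑' i : {i : ℤ // i ≠ n}, ∑' k : {k : ℤ // k ≠ n}, t i k)
      ≤ ∑' i : {i : ℤ // i ≠ n}, ∑' k : {k : ℤ // k ≠ n}, ENNReal.ofReal (t i k) :=
        (ENNReal.ofReal_tsum_le_tsum_ofReal fun _ => tsum_nonneg fun _ => ht _ _).trans
          (ENNReal.tsum_le_tsum fun _ => ENNReal.ofReal_tsum_le_tsum_ofReal fun _ => ht _ _)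
    _ ≤ ∑' i : ℤ, ∑' k : ℤ, ENNReal.ofReal (t i k) :=
        (ENNReal.tsum_le_tsum fun i : {i : ℤ // i ≠ n} => ENNReal.tsum_comp_le_tsum_of_injective
          Subtype.val_injective fun k => ENNReal.ofReal (t i k)).trans
          (ENNReal.tsum_comp_le_tsum_of_injective Subtype.val_injective
            fun i => ∑' k, ENNReal.ofReal (t i k))
    _ = ∑' i : ℤ, ∑' k : ℤ, ENNReal.ofReal (r (i + k) ^ 2) *
          ENNReal.ofReal (1 / (((|n - i| : ℤ) : ℝ) * ((|n - k| : ℤ) : ℝ))) := by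
        refine tsum_congr fun i => tsum_congr fun k => ?_
        rw [← ENNReal.ofReal_mul (sq_nonneg _), mul_one_div]
    _ = ∑' j, ENNReal.ofReal (r j ^ 2) * ENNReal.ofReal (invAbsConv (2 * n - j)) := by
        rw [ENNReal.tsum_tsum_mul_comp_add (fun j => ENNReal.ofReal (r j ^ 2))
          fun i k => ENNReal.ofReal (1 / (((|n - i| : ℤ) : ℝ) * ((|n - k| : ℤ) : ℝ)))]
        simp only [tsum_ofReal_one_div_abs_mul_abs_eq]
    _ = ENNReal.ofReal (∑' j, r j ^ 2 * invAbsConv (2 * n - j)) := by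
        rw [ENNReal.ofReal_tsum_of_nonneg (fun j => mul_nonneg (sq_nonneg _)
          (invAbsConv_nonneg _)) (summable_sq_mul_invAbsConv hr _)]
        simp only [ENNReal.ofReal_mul (sq_nonneg _)]

lemma abs_le_abs_two_mul_sub {n j : ℤ} (hj : |j| < |n|) : |n| ≤ |2 * n - j| := by
  rcases abs_cases n with ⟨hn, _⟩ | ⟨hn, _⟩ <;> rcases abs_cases j with ⟨hj', _⟩ | ⟨hj', _⟩ <;>
    rcases abs_cases (2 * n - j) with ⟨h, _⟩ | ⟨h, _⟩ <;> omega

lemma tsum_sq_mul_invAbsConv_le {r : ℤ → ℝ} (hr : Summable fun k => r k ^ 2) {n : ℤ}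
    (hn : n ≠ 0) :
    ∑' j, r j ^ 2 * invAbsConv (2 * n - j) ≤
      2 * (∑' a : ℤ, |(a : ℝ)| ^ (-(3 / 2 : ℝ))) *
        (∑' j : {j : ℤ // |n| ≤ |j|}, r j ^ 2 + √(2 / |(n : ℝ)|) * ∑' j, r j ^ 2) := by
  set Z := ∑' a : ℤ, |(a : ℝ)| ^ (-(3 / 2 : ℝ))
  set s : Set ℤ := {j | |n| ≤ |j|}
  have hZ : 0 ≤ Z := tsum_nonneg fun _ => by positivity
  have hN : 0 < |(n : ℝ)| := by positivity
  have hpt : ∀ j, r j ^ 2 * invAbsConv (2 * n - j) ≤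
      2 * Z * (s.indicator (fun j => r j ^ 2) j + √(2 / |(n : ℝ)|) * r j ^ 2) := by
    intro j
    by_cases hj : j ∈ s
    · rw [Set.indicator_of_mem hj]
      calc r j ^ 2 * invAbsConv (2 * n - j) ≤ r j ^ 2 * (2 * Z) :=
            mul_le_mul_of_nonneg_left (invAbsConv_le_two_mul _) (sq_nonneg _)
        _ ≤ _ := by
            nlinarith [mul_nonneg hZ (mul_nonneg (sqrt_nonneg (2 / |(n : ℝ)|)) (sq_nonneg (r j)))]
    · rw [Set.indicator_of_notMem hj, zero_add]
      have hfar : |(n : ℝ)| ≤ max |((2 * n - j : ℤ) : ℝ)| 2 :=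
        le_max_of_le_left (by exact_mod_cast abs_le_abs_two_mul_sub (not_le.1 hj))
      calc r j ^ 2 * invAbsConv (2 * n - j) ≤ r j ^ 2 * (2 * √(2 / |(n : ℝ)|) * Z) :=
            mul_le_mul_of_nonneg_left (invAbsConv_le _ hN hfar) (sq_nonneg _)
        _ = _ := by ring
  calc ∑' j, r j ^ 2 * invAbsConv (2 * n - j)
      ≤ ∑' j, 2 * Z * (s.indicator (fun j => r j ^ 2) j + √(2 / |(n : ℝ)|) * r j ^ 2) :=
        (summable_sq_mul_invAbsConv hr _).tsum_le_tsum hpt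
          (((hr.indicator s).add (hr.mul_left _)).mul_left _)
    _ = 2 * Z * (∑' j : {j : ℤ // |n| ≤ |j|}, r j ^ 2 + √(2 / |(n : ℝ)|) * ∑' j, r j ^ 2) := by
        rw [tsum_mul_left, (hr.indicator s).tsum_add (hr.mul_left _), tsum_mul_left,
          ← tsum_subtype s fun j => r j ^ 2]
        rfl

theorem stmt_5 :
    ∃ C : ℝ, 0 < C ∧ ∀ (r : ℤ → ℝ), (∀ k, 0 ≤ r k) →
      Summable (fun k => (r k) ^ 2) → ∀ n : ℤ, 1 ≤ |n| →
      ∑' i : {i : ℤ // i ≠ n}, ∑' k : {k : ℤ // k ≠ n},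
          (r ((i : ℤ) + (k : ℤ))) ^ 2 /
            (((|n - (i : ℤ)| : ℤ) : ℝ) * ((|n - (k : ℤ)| : ℤ) : ℝ)) ≤
        C * ((∑' k : ℤ, (r k) ^ 2) / Real.sqrt ((|n| : ℤ) : ℝ) +
          ∑' j : {j : ℤ // |n| ≤ |j|}, (r (j : ℤ)) ^ 2) := by
  set Z := ∑' a : ℤ, |(a : ℝ)| ^ (-(3 / 2 : ℝ))
  have hZ : 1 ≤ Z := by
    simpa using (summable_abs_int_rpow (b := 3 / 2) (by norm_num)).le_tsum 1
      fun _ _ => by positivity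
  refine ⟨4 * Z, by positivity, fun r _ hr n hn => ?_⟩
  have hn0 : n ≠ 0 := by rintro rfl; simp at hn
  have hsqrt : √(2 / |(n : ℝ)|) ≤ 2 / √|(n : ℝ)| := by
    rw [sqrt_div' _ (abs_nonneg _)]
    gcongr
    nlinarith [sq_sqrt (zero_le_two (α := ℝ)), sqrt_nonneg 2]
  have hE : 0 ≤ ∑' j : {j : ℤ // |n| ≤ |j|}, r j ^ 2 := tsum_nonneg fun _ => sq_nonneg _
  have hR : 0 ≤ ∑' j, r j ^ 2 := tsum_nonneg fun _ => sq_nonneg _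
  rw [show ((|n| : ℤ) : ℝ) = |(n : ℝ)| from Int.cast_abs]
  calc _ ≤ ∑' j, r j ^ 2 * invAbsConv (2 * n - j) := tsum_tsum_sq_div_le_tsum_mul_invAbsConv hr n
    _ ≤ 2 * Z * (∑' j : {j : ℤ // |n| ≤ |j|}, r j ^ 2 + √(2 / |(n : ℝ)|) * ∑' j, r j ^ 2) :=
        tsum_sq_mul_invAbsConv_le hr hn0
    _ ≤ 2 * Z * (∑' j : {j : ℤ // |n| ≤ |j|}, r j ^ 2 + 2 / √|(n : ℝ)| * ∑' j, r j ^ 2) := by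
        gcongr
    _ ≤ 4 * Z * ((∑' k, r k ^ 2) / √|(n : ℝ)| + ∑' j : {j : ℤ // |n| ≤ |j|}, r j ^ 2) := by
        rw [div_mul_comm, mul_comm (2 : ℝ)]
        nlinarith
end

section
/- Let r ∈ ℓ²(ℤ) be nonnegative, with tail norms E_m(r) = (Σ_{|j|≥m} r(j)²)^{1/2}. For every integer n with |n| ≥ 1 and complex λ with |λ - n| = 1/2, Σ_{i∈ℤ} Σ_{k∈ℤ} r(i+k)²/(|λ-i||λ-k|) ≤ C(‖r‖²/√|n| + E_{|n|}(r)²) for some absolute constant C. -/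
/-!
Put `u i = 1 + |i - n|`; since `|λ - n| = 1/2`, `u i ≤ 4 |λ - i|`. For positive `u, v`,
`1/(uv) ≤ √(2/(u+v)) (u^(-3/2) + v^(-3/2))`, and `u i + u k ≥ 2 + |i + k - 2n|`, which exceeds
`|n|` as soon as `|i + k| < |n|`. So the `(i, k)` term is at most
`16 r(i+k)² w(i+k) (β(i-n) + β(k-n))`, where `β j = (1 + |j|)^(-3/2)` is summable and the weight
`w` is at most `2/√|n|` off the tail `|m| ≥ |n|` and at most `1` on it. Summing along the
antidiagonals `i + k = m` bounds the double sum by `32 (∑ β) ∑ₘ r(m)² w(m)`. The rearrangement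
is done in `ℝ≥0∞`, where it needs no summability hypotheses.
-/

open scoped ENNReal

noncomputable def decay (j : ℤ) : ℝ := (1 + |(j : ℝ)|) ^ (-(3 / 2 : ℝ))

lemma decay_nonneg (j : ℤ) : 0 ≤ decay j := by unfold decay; positivity

lemma summable_decay : Summable decay := by
  refine (Real.summable_abs_int_rpow (b := 3 / 2) (by norm_num)).of_norm_bounded_eventually ?_
  filter_upwards [Set.Finite.compl_mem_cofinite (Set.finite_singleton (0 : ℤ))] with j hj
  have hj : (0 : ℝ) < |(j : ℝ)| := by simpa using hj
  rw [Real.norm_of_nonneg (decay_nonneg j)]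
  exact Real.rpow_le_rpow_of_nonpos hj (by linarith) (by norm_num)

lemma tsum_decay_pos : 0 < ∑' j, decay j :=
  summable_decay.tsum_pos decay_nonneg 0 (by simp [decay])

lemma inv_mul_le_sqrt_mul_rpow_add_rpow {u v : ℝ} (hu : 0 < u) (hv : 0 < v) :
    (u * v)⁻¹ ≤ √(2 / (u + v)) * (u ^ (-(3 / 2 : ℝ)) + v ^ (-(3 / 2 : ℝ))) := by
  wlog huv : u ≤ v generalizing u v
  · simpa only [mul_comm, add_comm] using this hv hu (le_of_not_ge huv)
  have hpow : u ^ (-(3 / 2 : ℝ)) = u⁻¹ / √u := by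
    rw [Real.rpow_neg hu.le, show (3 / 2 : ℝ) = 1 + 1 / 2 by norm_num, Real.rpow_add hu,
      Real.rpow_one, ← Real.sqrt_eq_rpow, mul_inv, div_eq_mul_inv]
  have hsqrt : √u / v ≤ √(2 / (u + v)) := by
    rw [Real.le_sqrt (by positivity) (by positivity), div_pow, Real.sq_sqrt hu.le,
      div_le_div_iff₀ (by positivity) (by positivity)]
    nlinarith
  calc (u * v)⁻¹ = u ^ (-(3 / 2 : ℝ)) * (√u / v) := by
        rw [hpow]; field_simp [(Real.sqrt_pos.2 hu).ne']
    _ ≤ √(2 / (u + v)) * u ^ (-(3 / 2 : ℝ)) := by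
        rw [mul_comm]; gcongr
    _ ≤ _ := by gcongr; exact le_add_of_nonneg_right (by positivity)

lemma one_add_abs_sub_le_four_mul_norm {lam : ℂ} {n : ℤ} (hlam : ‖lam - n‖ = 1 / 2) (i : ℤ) :
    1 + |((i - n : ℤ) : ℝ)| ≤ 4 * ‖lam - i‖ := by
  have hdist : |((i - n : ℤ) : ℝ)| ≤ ‖lam - i‖ + 1 / 2 := by
    calc |((i - n : ℤ) : ℝ)| = ‖(i : ℂ) - n‖ := by
          rw [← Complex.norm_intCast]; push_cast; rfl
      _ ≤ ‖(i : ℂ) - lam‖ + ‖lam - n‖ := norm_sub_le_norm_sub_add_norm_sub _ _ _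
      _ = ‖lam - i‖ + 1 / 2 := by rw [norm_sub_rev, hlam]
  rcases eq_or_ne i n with rfl | hne
  · rw [sub_self, hlam]; norm_num
  · have : (1 : ℝ) ≤ |((i - n : ℤ) : ℝ)| := by
      exact_mod_cast Int.one_le_abs (sub_ne_zero.2 hne)
    linarith

-- Bounds `√(2 / (u i + u k))` along the antidiagonal `i + k = m`, where `u j = 1 + |j - n|`.
noncomputable def antidiagWeight (n m : ℤ) : ℝ := √(2 / (2 + |((m - 2 * n : ℤ) : ℝ)|))

lemma inv_norm_mul_norm_le {lam : ℂ} {n : ℤ} (hlam : ‖lam - n‖ = 1 / 2) (i k : ℤ) :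
    (‖lam - i‖ * ‖lam - k‖)⁻¹ ≤
      16 * (antidiagWeight n (i + k) * (decay (i - n) + decay (k - n))) := by
  set u := 1 + |((i - n : ℤ) : ℝ)|
  set v := 1 + |((k - n : ℤ) : ℝ)|
  have hu : 0 < u := by positivity
  have hv : 0 < v := by positivity
  have huv : 2 + |((i + k - 2 * n : ℤ) : ℝ)| ≤ u + v := by
    have : |i + k - 2 * n| ≤ |i - n| + |k - n| := by
      rw [show i + k - 2 * n = (i - n) + (k - n) by ring]; exact abs_add_le _ _
    have hcast := (Int.cast_le (R := ℝ)).2 this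
    push_cast at hcast
    simp only [u, v]
    push_cast
    linarith
  calc (‖lam - i‖ * ‖lam - k‖)⁻¹ ≤ (u * v / 16)⁻¹ := by
        gcongr
        nlinarith [one_add_abs_sub_le_four_mul_norm hlam i, one_add_abs_sub_le_four_mul_norm hlam k]
    _ = 16 * (u * v)⁻¹ := by rw [inv_div, div_eq_mul_inv]
    _ ≤ 16 * (√(2 / (u + v)) * (decay (i - n) + decay (k - n))) := by
        gcongr; exact inv_mul_le_sqrt_mul_rpow_add_rpow hu hv
    _ ≤ _ := by
        unfold antidiagWeight
        have := add_nonneg (decay_nonneg (i - n)) (decay_nonneg (k - n))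
        gcongr

lemma antidiagWeight_le_one (n m : ℤ) : antidiagWeight n m ≤ 1 := by
  rw [antidiagWeight, Real.sqrt_le_one, div_le_one (by positivity)]
  linarith [abs_nonneg ((m - 2 * n : ℤ) : ℝ)]

lemma antidiagWeight_le_of_abs_lt {n m : ℤ} (hm : |m| < |n|) :
    antidiagWeight n m ≤ 2 / √((|n| : ℤ) : ℝ) := by
  have hn : (0 : ℝ) < ((|n| : ℤ) : ℝ) := by exact_mod_cast (abs_nonneg m).trans_lt hm
  have hfar : ((|n| : ℤ) : ℝ) ≤ 2 + |((m - 2 * n : ℤ) : ℝ)| := by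
    have : |n| ≤ 2 + |m - 2 * n| := by
      have h2n : |2 * n| = 2 * |n| := by rw [abs_mul, abs_two]
      linarith [abs_sub_abs_le_abs_sub (2 * n) m, abs_sub_comm (2 * n) m]
    rw [← Int.cast_abs]; exact_mod_cast this
  rw [antidiagWeight, le_div_iff₀ (Real.sqrt_pos.2 hn), ← Real.sqrt_mul (by positivity),
    Real.sqrt_le_left (by norm_num), div_mul_eq_mul_div, div_le_iff₀ (by positivity)]
  linarith

lemma summable_sq_mul_antidiagWeight {r : ℤ → ℝ} (hr : Summable (fun k => r k ^ 2)) (n : ℤ) :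
    Summable (fun m => r m ^ 2 * antidiagWeight n m) :=
  hr.of_nonneg_of_le (fun _ => mul_nonneg (sq_nonneg _) (Real.sqrt_nonneg _))
    (fun m => mul_le_of_le_one_right (sq_nonneg _) (antidiagWeight_le_one n m))

lemma tsum_sq_mul_antidiagWeight_le {r : ℤ → ℝ} (hr : Summable (fun k => r k ^ 2)) (n : ℤ) :
    ∑' m, r m ^ 2 * antidiagWeight n m ≤
      2 * ((∑' k, r k ^ 2) / √((|n| : ℤ) : ℝ) + ∑' j : {j : ℤ // |n| ≤ |j|}, r j ^ 2) := by
  set far := {j : ℤ | |n| ≤ |j|}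
  have hpoint : ∀ m, r m ^ 2 * antidiagWeight n m ≤
      2 * (r m ^ 2 / √((|n| : ℤ) : ℝ) + far.indicator (fun j => r j ^ 2) m) := by
    intro m
    by_cases hm : |n| ≤ |m|
    · rw [Set.indicator_of_mem (by exact hm)]
      nlinarith [antidiagWeight_le_one n m, sq_nonneg (r m),
        div_nonneg (sq_nonneg (r m)) (Real.sqrt_nonneg ((|n| : ℤ) : ℝ))]
    · rw [Set.indicator_of_notMem (by exact hm), add_zero, mul_div_left_comm]
      exact mul_le_mul_of_nonneg_left (antidiagWeight_le_of_abs_lt (not_le.1 hm)) (sq_nonneg _)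
  have hfar : Summable (far.indicator fun j => r j ^ 2) := hr.indicator far
  calc ∑' m, r m ^ 2 * antidiagWeight n m
      ≤ ∑' m, 2 * (r m ^ 2 / √((|n| : ℤ) : ℝ) + far.indicator (fun j => r j ^ 2) m) :=
        (summable_sq_mul_antidiagWeight hr n).tsum_le_tsum
          hpoint (((hr.div_const _).add hfar).mul_left 2)
    _ = _ := by
        rw [tsum_mul_left, (hr.div_const _).tsum_add hfar, tsum_div_const, ← tsum_subtype]
        rfl

lemma ENNReal.tsum_tsum_mul_add_eq {G : Type*} [AddCommGroup G] (f g : G → ℝ≥0∞) (c : G) :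
    ∑' i, ∑' k, f (i + k) * (g (i - c) + g (k - c)) = 2 * (∑' m, f m) * ∑' j, g j := by
  have hshift : ∀ i, ∑' k, f (i + k) = ∑' m, f m := fun i => (Equiv.addLeft i).tsum_eq f
  have hone : ∑' i, ∑' k, f (i + k) * g (i - c) = (∑' m, f m) * ∑' j, g j := by
    simp_rw [ENNReal.tsum_mul_right, hshift, ENNReal.tsum_mul_left]
    rw [← (Equiv.subRight c).tsum_eq g]
    rfl
  have htwo : ∑' i, ∑' k, f (i + k) * g (k - c) = (∑' m, f m) * ∑' j, g j := by
    rw [ENNReal.tsum_comm, ← hone]; simp_rw [add_comm]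
  simp_rw [mul_add, ENNReal.tsum_add, hone, htwo, two_mul, add_mul]

lemma tsum_tsum_le_of_ofReal_le {α β : Type*} {f : α → β → ℝ} (hf : ∀ i k, 0 ≤ f i k) {B : ℝ}
    (hB : 0 ≤ B) (h : ∑' i, ∑' k, ENNReal.ofReal (f i k) ≤ ENNReal.ofReal B) :
    ∑' i, ∑' k, f i k ≤ B := by
  have hfin : ∑' i, ∑' k, ENNReal.ofReal (f i k) ≠ ∞ :=
    ne_top_of_le_ne_top ENNReal.ofReal_ne_top h
  refine le_of_eq_of_le ?_ (ENNReal.toReal_le_of_le_ofReal hB h)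
  rw [ENNReal.tsum_toReal_eq (fun i => ne_top_of_le_ne_top hfin (ENNReal.le_tsum i))]
  congr 1 with i
  rw [ENNReal.tsum_toReal_eq (fun _ => ENNReal.ofReal_ne_top)]
  simp_rw [ENNReal.toReal_ofReal (hf i _)]

lemma tsum_tsum_le_of_le_mul_add {G : Type*} [AddCommGroup G] {f : G → G → ℝ} {ρ β : G → ℝ}
    (hf : ∀ i k, 0 ≤ f i k) (hρ : ∀ m, 0 ≤ ρ m) (hβ : ∀ j, 0 ≤ β j) (hρs : Summable ρ)
    (hβs : Summable β) (c : G) (h : ∀ i k, f i k ≤ ρ (i + k) * (β (i - c) + β (k - c))) :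
    ∑' i, ∑' k, f i k ≤ 2 * (∑' m, ρ m) * ∑' j, β j := by
  have hsum : 0 ≤ 2 * ∑' m, ρ m := mul_nonneg zero_le_two (tsum_nonneg hρ)
  refine tsum_tsum_le_of_ofReal_le hf (mul_nonneg hsum (tsum_nonneg hβ)) ?_
  calc ∑' i, ∑' k, ENNReal.ofReal (f i k)
      ≤ ∑' i, ∑' k, ENNReal.ofReal (ρ (i + k)) *
          (ENNReal.ofReal (β (i - c)) + ENNReal.ofReal (β (k - c))) := by
        gcongr with i k
        rw [← ENNReal.ofReal_add (hβ _) (hβ _), ← ENNReal.ofReal_mul (hρ _)]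
        exact ENNReal.ofReal_le_ofReal (h i k)
    _ = 2 * (∑' m, ENNReal.ofReal (ρ m)) * ∑' j, ENNReal.ofReal (β j) :=
        ENNReal.tsum_tsum_mul_add_eq (fun m => ENNReal.ofReal (ρ m))
          (fun j => ENNReal.ofReal (β j)) c
    _ = ENNReal.ofReal (2 * (∑' m, ρ m) * ∑' j, β j) := by
        rw [← ENNReal.ofReal_tsum_of_nonneg hρ hρs, ← ENNReal.ofReal_tsum_of_nonneg hβ hβs,
          ENNReal.ofReal_mul hsum, ENNReal.ofReal_mul zero_le_two, ENNReal.ofReal_ofNat]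

theorem stmt_13 :
    ∃ C : ℝ, 0 < C ∧ ∀ (r : ℤ → ℝ), (∀ k, 0 ≤ r k) →
      Summable (fun k => (r k) ^ 2) → ∀ n : ℤ, 1 ≤ |n| →
      ∀ lam : ℂ, ‖lam - (n : ℂ)‖ = 1 / 2 →
      ∑' i : ℤ, ∑' k : ℤ,
          (r (i + k)) ^ 2 /
            (‖lam - (i : ℂ)‖ * ‖lam - (k : ℂ)‖) ≤
        C * ((∑' k : ℤ, (r k) ^ 2) / Real.sqrt ((|n| : ℤ) : ℝ) +
          ∑' j : {j : ℤ // |n| ≤ |j|}, (r (j : ℤ)) ^ 2) := by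
  have hC : 0 < 64 * ∑' j, decay j := mul_pos (by norm_num) tsum_decay_pos
  refine ⟨_, hC, fun r _ hr n _ lam hlam => ?_⟩
  set ρ : ℤ → ℝ := fun m => 16 * (r m ^ 2 * antidiagWeight n m)
  have hρ : ∀ m, 0 ≤ ρ m := fun m =>
    mul_nonneg (by norm_num) (mul_nonneg (sq_nonneg _) (Real.sqrt_nonneg _))
  have hterm : ∀ i k, r (i + k) ^ 2 / (‖lam - i‖ * ‖lam - k‖) ≤
      ρ (i + k) * (decay (i - n) + decay (k - n)) := fun i k => by
    rw [div_eq_mul_inv]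
    nlinarith [inv_norm_mul_norm_le hlam i k, sq_nonneg (r (i + k))]
  calc _ ≤ 2 * (∑' m, ρ m) * ∑' j, decay j :=
        tsum_tsum_le_of_le_mul_add (fun i k => by positivity) hρ decay_nonneg
          ((summable_sq_mul_antidiagWeight hr n).mul_left 16) summable_decay n hterm
    _ ≤ _ := by
        rw [tsum_mul_left]
        nlinarith [tsum_sq_mul_antidiagWeight_le hr n, tsum_decay_pos]
end

section
/- Let r ∈ ℓ²(ℤ) be nonnegative with norm ‖r‖ and tail norms E_N(r). There is an absolute constant C such that for every N ≥ 1, Σ over pairs (j̃, p̃) of nonzero integers of (1/j̃²)(1/p̃²)·Σ_{|n|>N} r(2n - j̃ - p̃)² is at most C(E_N(r)² + ‖r‖²/N). -/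
open Finset

/- Proof idea: the inner sum `∑_{|n| > N} r(2n - j - p)²` is at most `E_N(r)²` when
`|j + p| ≤ N`, since then `|2n - j - p| ≥ N`, and at most `‖r‖²` in general.
If `|j + p| > N`, one of `|j|, |p|` exceeds `N / 2`, and the tail `∑_{|j| > N/2} 1/j²` is
`O(1/N)`. Summing the weights `1/j² · 1/p²` over both cases gives the bound with `C = 64`. -/

lemma tsum_prod_le_of_le_mul_add {ι : Type*} {u t : ι → ℝ} (hu0 : ∀ x, 0 ≤ u x)
    (ht0 : ∀ x, 0 ≤ t x) (hu : Summable u) (ht : Summable t) {F : ι × ι → ℝ}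
    (hF0 : ∀ z, 0 ≤ F z) (a b : ℝ)
    (hF : ∀ x y, F (x, y) ≤ u x * u y * a + (t x * u y + u x * t y) * b) :
    ∑' z, F z ≤ (∑' x, u x) ^ 2 * a + 2 * (∑' x, t x) * (∑' x, u x) * b := by
  have hmul {v w : ι → ℝ} (hv0 : ∀ x, 0 ≤ v x) (hw0 : ∀ x, 0 ≤ w x) (hv : Summable v)
      (hw : Summable w) :
      HasSum (fun z : ι × ι => v z.1 * w z.2) ((∑' x, v x) * ∑' x, w x) :=
    hv.hasSum.mul hw.hasSum (hv.mul_of_nonneg hw hv0 hw0)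
  have hG := ((hmul hu0 hu0 hu hu).mul_right a).add
    (((hmul ht0 hu0 ht hu).add (hmul hu0 ht0 hu ht)).mul_right b)
  have hFG (z : ι × ι) : F z ≤ u z.1 * u z.2 * a + (t z.1 * u z.2 + u z.1 * t z.2) * b :=
    hF z.1 z.2
  have hFs : Summable F := hG.summable.of_nonneg_of_le hF0 hFG
  exact (hasSum_le hFG hFs.hasSum hG).trans_eq (by ring)

lemma tsum_natAbs_le_two_mul {g : ℕ → ℝ} (hg0 : ∀ n, 0 ≤ g n) (hg : Summable g) :
    ∑' j : ℤ, g j.natAbs ≤ 2 * ∑' n, g n := by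
  have h := Summable.tsum_of_nat_of_neg (f := fun j : ℤ => g j.natAbs) (by simpa using hg)
    (by simpa using hg)
  simp only [Int.natAbs_natCast, Int.natAbs_neg, Int.natAbs_zero] at h
  linarith [hg0 0]

noncomputable def invSqTail (k : ℕ) (j : ℤ) : ℝ :=
  if k < j.natAbs then 1 / (j : ℝ) ^ 2 else 0

lemma invSqTail_nonneg (k : ℕ) (j : ℤ) : 0 ≤ invSqTail k j := by
  unfold invSqTail; split_ifs <;> positivity

lemma invSqTail_le (k : ℕ) (j : ℤ) : invSqTail k j ≤ 1 / (j : ℝ) ^ 2 := by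
  unfold invSqTail; split_ifs <;> first | rfl | positivity

-- At `j = 0` both sides vanish, because `1 / 0 = 0` in `ℝ`.
lemma invSqTail_zero (j : ℤ) : invSqTail 0 j = 1 / (j : ℝ) ^ 2 := by
  unfold invSqTail; split_ifs with h
  · rfl
  · simp_all

lemma summable_invSqTail (k : ℕ) : Summable (invSqTail k) :=
  (Real.summable_one_div_int_pow.mpr one_lt_two).of_nonneg_of_le (invSqTail_nonneg k)
    (invSqTail_le k)

lemma invSqTail_natAbs (k : ℕ) (j : ℤ) : invSqTail k j.natAbs = invSqTail k j := by
  simp [invSqTail, Int.natAbs_abs]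

lemma tsum_nat_invSqTail_le (k : ℕ) : ∑' n : ℕ, invSqTail k n ≤ 2 / ((k : ℝ) + 1) := by
  refine Real.tsum_le_of_sum_range_le (fun n => invSqTail_nonneg k n) fun n => ?_
  have hIoo : (range n).filter (k < ·) = Ioo k n := by ext; simp; omega
  simp only [invSqTail, Int.natAbs_natCast, Int.cast_natCast]
  rw [← sum_filter, hIoo]
  simpa only [one_div] using sum_Ioo_inv_sq_le (α := ℝ) k n

lemma tsum_invSqTail_le (k : ℕ) : ∑' j, invSqTail k j ≤ 4 / ((k : ℝ) + 1) :=
  calc ∑' j, invSqTail k j = ∑' j : ℤ, invSqTail k j.natAbs := by simp only [invSqTail_natAbs]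
    _ ≤ 2 * ∑' n : ℕ, invSqTail k n := tsum_natAbs_le_two_mul (fun n => invSqTail_nonneg k n)
        ((summable_invSqTail k).comp_injective Nat.cast_injective)
    _ ≤ 2 * (2 / ((k : ℝ) + 1)) := by gcongr; exact tsum_nat_invSqTail_le k
    _ = 4 / ((k : ℝ) + 1) := by ring

lemma tsum_subtype_ne_zero_invSqTail_le (k : ℕ) :
    ∑' j : {j : ℤ // j ≠ 0}, invSqTail k j ≤ 4 / ((k : ℝ) + 1) :=
  ((summable_invSqTail k).tsum_subtype_le _ {j | j ≠ 0} (invSqTail_nonneg k)).trans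
    (tsum_invSqTail_le k)

noncomputable def tailSum (r : ℤ → ℝ) (N : ℕ) (j p : ℤ) : ℝ :=
  ∑' n : {n : ℤ // (N : ℤ) < |n|}, r (2 * n - j - p) ^ 2

lemma tailSum_nonneg (r : ℤ → ℝ) (N : ℕ) (j p : ℤ) : 0 ≤ tailSum r N j p :=
  tsum_nonneg fun _ => sq_nonneg _

section

variable {r : ℤ → ℝ} (hr : Summable fun k => r k ^ 2) (N : ℕ) (j p : ℤ)
include hr

lemma summable_tailSum :
    Summable fun n : {n : ℤ // (N : ℤ) < |n|} => r (2 * n - j - p) ^ 2 :=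
  hr.comp_injective (i := fun n : {n : ℤ // (N : ℤ) < |n|} => 2 * (n : ℤ) - j - p)
    fun a b hab => Subtype.ext (by simp only at hab; omega)

lemma tailSum_le_tsum : tailSum r N j p ≤ ∑' k, r k ^ 2 :=
  (summable_tailSum hr N j p).tsum_le_tsum_of_inj (fun n => 2 * (n : ℤ) - j - p)
    (fun a b hab => Subtype.ext (by simp only at hab; omega)) (fun _ _ => sq_nonneg _)
    (fun _ => le_rfl) hr

lemma tailSum_le_tail (hjp : |j + p| ≤ N) :
    tailSum r N j p ≤ ∑' m : {m : ℤ // (N : ℤ) ≤ |m|}, r m ^ 2 := by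
  have hmem (n : {n : ℤ // (N : ℤ) < |n|}) : (N : ℤ) ≤ |2 * (n : ℤ) - j - p| := by
    have hn := n.2
    rw [lt_abs] at hn
    rw [abs_le] at hjp
    rw [le_abs]
    omega
  exact (summable_tailSum hr N j p).tsum_le_tsum_of_inj
    (fun n => ⟨2 * (n : ℤ) - j - p, hmem n⟩)
    (fun a b hab => Subtype.ext (by simp only [Subtype.mk.injEq] at hab; omega))
    (fun _ _ => sq_nonneg _) (fun _ => le_rfl) (hr.comp_injective Subtype.val_injective)

lemma mul_tailSum_le :
    1 / (j : ℝ) ^ 2 * (1 / (p : ℝ) ^ 2) * tailSum r N j p ≤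
      1 / (j : ℝ) ^ 2 * (1 / (p : ℝ) ^ 2) * ∑' m : {m : ℤ // (N : ℤ) ≤ |m|}, r m ^ 2 +
        (invSqTail (N / 2) j * (1 / (p : ℝ) ^ 2) + 1 / (j : ℝ) ^ 2 * invSqTail (N / 2) p) *
          ∑' k, r k ^ 2 := by
  have hS : 0 ≤ ∑' k, r k ^ 2 := tsum_nonneg fun _ => sq_nonneg _
  have hE : 0 ≤ ∑' m : {m : ℤ // (N : ℤ) ≤ |m|}, r m ^ 2 :=
    tsum_nonneg fun _ => sq_nonneg _
  have hwj : 0 ≤ 1 / (j : ℝ) ^ 2 := by positivity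
  have hwp : 0 ≤ 1 / (p : ℝ) ^ 2 := by positivity
  have htj := invSqTail_nonneg (N / 2) j
  have htp := invSqTail_nonneg (N / 2) p
  by_cases hjp : |j + p| ≤ N
  · have hsmall := mul_le_mul_of_nonneg_left (tailSum_le_tail hr N j p hjp) (mul_nonneg hwj hwp)
    linarith [mul_nonneg (mul_nonneg htj hwp) hS, mul_nonneg (mul_nonneg hwj htp) hS]
  · have hlarge := mul_le_mul_of_nonneg_left (tailSum_le_tsum hr N j p) (mul_nonneg hwj hwp)
    have hjp' : N / 2 < j.natAbs ∨ N / 2 < p.natAbs := by rw [not_le, lt_abs] at hjp; omega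
    rcases hjp' with h | h
    · rw [show invSqTail (N / 2) j = 1 / (j : ℝ) ^ 2 from if_pos h]
      linarith [mul_nonneg (mul_nonneg hwj htp) hS, mul_nonneg (mul_nonneg hwj hwp) hE]
    · rw [show invSqTail (N / 2) p = 1 / (p : ℝ) ^ 2 from if_pos h]
      linarith [mul_nonneg (mul_nonneg htj hwp) hS, mul_nonneg (mul_nonneg hwj hwp) hE]

end

theorem stmt_18 :
    ∃ C : ℝ, 0 < C ∧ ∀ (r : ℤ → ℝ), (∀ k, 0 ≤ r k) →
      Summable (fun k => (r k) ^ 2) → ∀ N : ℕ, 1 ≤ N →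
      ∑' jp : {j : ℤ // j ≠ 0} × {p : ℤ // p ≠ 0},
          (1 / ((jp.1 : ℤ) : ℝ) ^ 2) * (1 / ((jp.2 : ℤ) : ℝ) ^ 2) *
            ∑' n : {n : ℤ // (N : ℤ) < |n|},
              (r (2 * (n : ℤ) - (jp.1 : ℤ) - (jp.2 : ℤ))) ^ 2 ≤
        C * ((∑' m : {m : ℤ // (N : ℤ) ≤ |m|}, (r (m : ℤ)) ^ 2) +
          (∑' k : ℤ, (r k) ^ 2) / N) := by
  refine ⟨64, by norm_num, fun r _ hr N hN => ?_⟩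
  have hw := tsum_subtype_ne_zero_invSqTail_le 0
  simp only [invSqTail_zero, CharP.cast_eq_zero, zero_add, div_one] at hw
  have ht : ∑' j : {j : ℤ // j ≠ 0}, invSqTail (N / 2) j ≤ 8 / N := by
    refine (tsum_subtype_ne_zero_invSqTail_le _).trans ?_
    have hN2 : (N : ℝ) ≤ 2 * ((N / 2 : ℕ) : ℝ) + 2 := by
      exact_mod_cast (by omega : N ≤ 2 * (N / 2) + 2)
    rw [div_le_div_iff₀ (by positivity) (by positivity)]
    linarith
  have hE : 0 ≤ ∑' m : {m : ℤ // (N : ℤ) ≤ |m|}, r m ^ 2 :=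
    tsum_nonneg fun _ => sq_nonneg _
  have hS : 0 ≤ (∑' k, r k ^ 2) / N := by positivity
  refine (tsum_prod_le_of_le_mul_add
    (u := fun j : {j : ℤ // j ≠ 0} => 1 / ((j : ℤ) : ℝ) ^ 2)
    (fun _ => by positivity) (fun j => invSqTail_nonneg (N / 2) j)
    ((Real.summable_one_div_int_pow.mpr one_lt_two).comp_injective Subtype.val_injective)
    ((summable_invSqTail (N / 2)).comp_injective Subtype.val_injective)
    (fun jp => mul_nonneg (by positivity) (tailSum_nonneg r N jp.1 jp.2)) _ _
    fun j p => mul_tailSum_le hr N j p).trans ?_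
  calc _ ≤ 4 ^ 2 * (∑' m : {m : ℤ // (N : ℤ) ≤ |m|}, r m ^ 2) +
        2 * (8 / N) * 4 * ∑' k, r k ^ 2 := by gcongr
    _ ≤ _ := by ring_nf; linarith
end
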